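/- Positive integers n−1 ≥ d_1 ≥ d_2 ≥ ⋯ ≥ d_n are the vertex degree sequence of a bicyclic graph (a connected simple graph on n vertices with n+1 edges) if and only if n ≥ 4, Σ_{i=1}^n d_i = 2(n+1), and at least four of the d_i are greater than or equal to 2 (i.e. d_4 ≥ 2). -/

import Mathlib

/-- `d` (0-indexed) is the degree sequence of `G`: some relabelling of the
vertices realizes the degrees `d 0, …, d (n-1)`. -/
def IsDegreeSequence {n : ℕ} (G : SimpleGraph (Fin n)) (d : ℕ → ℕ) : Prop :=
  ∃ σ : Equiv.Perm (Fin n), ∀ i : Fin n, (G.neighborSet (σ i)).ncard = d (i : ℕ)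

/-!
Only `d 3 ≥ 2` uses the order of the sequence: it says that at least four degrees are `≥ 2`,
and everything else is argued for unsorted degree functions `f : V → ℕ`.

If only `k ≤ 3` vertices of a graph on `n` vertices have degree `≥ 2`, then at most `n - k` edges
meet a vertex of degree `≤ 1` and at most `k.choose 2` edges join two of the others, which is
fewer than `n + 1` edges.

Conversely, induct on `n`. If some `f v = 1`, realise the function on the other vertices in
which a vertex `w` of largest value loses `1`, and attach `v` as a leaf to `w`; taking `w`
of largest value keeps all the conditions. If all values are `≥ 2`, they are all `2` except
for a total excess of `2` at vertices `a`, `b`: this is realised by the path `0 - 1 - ⋯ - (n-1)`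
with the two chords `{0, 2}` and `{c, n - 1}`, where `c = 2` if `a = b` (two cycles sharing a
vertex) and `c = 0` otherwise (a theta graph).
-/

open Finset

lemma Equiv.exists_apply_eq_and_apply_eq {α β : Type*} [DecidableEq β] (e : α ≃ β) {x y : α}
    {a b : β} (h : x = y ↔ a = b) : ∃ e' : α ≃ β, e' x = a ∧ e' y = b := by
  set e₁ := e.trans (swap (e x) a)
  refine ⟨e₁.trans (swap (e₁ y) b), ?_, swap_apply_left _ _⟩
  have hx : e₁ x = a := by simp [e₁]
  by_cases hxy : x = y
  · subst hxy
    simp [hx, ← h.1 rfl]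
  · have hya : e₁ y ≠ a := hx ▸ e₁.injective.ne (Ne.symm hxy)
    simp only [trans_apply, hx]
    exact swap_apply_of_ne_of_ne hya.symm (h.not.1 hxy)

lemma exists_eq_ite_add_ite_of_sum_eq_two {V : Type*} [Fintype V] [DecidableEq V] (g : V → ℕ)
    (h : ∑ v, g v = 2) : ∃ a b, ∀ v, g v = (if v = a then 1 else 0) + if v = b then 1 else 0 := by
  set m : Multiset V := ∑ v, g v • {v}
  have hcount : ∀ u, m.count u = g u := fun u => by
    simp [m, Multiset.count_sum', Multiset.count_singleton]
  obtain ⟨a, b, hab⟩ := Multiset.card_eq_two.1 (by simp [m, ← h] : Multiset.card m = 2)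
  refine ⟨b, a, fun v => ?_⟩
  rw [← hcount, hab, Multiset.insert_eq_cons, Multiset.count_cons, Multiset.count_singleton]

lemma card_add_card_filter_add_le_sum {V : Type*} [Fintype V] {f : V → ℕ} (hf : ∀ v, 1 ≤ f v)
    {x w : V} (hxw : x ≠ w) :
    Fintype.card V + #{v | 2 ≤ f v} + (f x - 2) + (f w - 2) ≤ ∑ v, f v := by
  classical
  calc Fintype.card V + #{v | 2 ≤ f v} + (f x - 2) + (f w - 2)
      = ∑ v, (1 + (if 2 ≤ f v then 1 else 0) + (if v = x then f x - 2 else 0) +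
          if v = w then f w - 2 else 0) := by
        simp only [sum_add_distrib, sum_boole, sum_ite_eq', mem_univ, if_true, card_univ,
          sum_const, smul_eq_mul, mul_one, Nat.cast_id]
    _ ≤ ∑ v, f v := sum_le_sum fun v _ => by
        have := hf v
        split_ifs <;> subst_vars <;> first | omega | exact absurd rfl hxw

namespace SimpleGraph

variable {V : Type*}

section Fintype

variable [Fintype V] (G : SimpleGraph V)

lemma ncard_neighborSet_eq_degree [DecidableRel G.Adj] (v : V) :
    (G.neighborSet v).ncard = G.degree v := by
  simp only [← card_neighborFinset_eq_degree, ← Set.ncard_coe_finset, coe_neighborFinset]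

lemma sum_ncard_neighborSet_eq_two_mul_ncard_edgeSet :
    ∑ v, (G.neighborSet v).ncard = 2 * G.edgeSet.ncard := by
  classical
  simp only [ncard_neighborSet_eq_degree, ← coe_edgeFinset, Set.ncard_coe_finset,
    sum_degrees_eq_twice_card_edges]

lemma ncard_edgeSet_le :
    G.edgeSet.ncard ≤
      #{v | (G.neighborSet v).ncard ≤ 1} + (#{v | 2 ≤ (G.neighborSet v).ncard}).choose 2 := by
  classical
  set S : Finset V := {v | 2 ≤ (G.neighborSet v).ncard}
  set L : Finset V := {v | (G.neighborSet v).ncard ≤ 1}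
  have inner : #{e ∈ G.edgeFinset | ∀ v ∈ e, v ∈ S} ≤ (#S).choose 2 := by
    rw [← Sym2.card_image_offDiag]
    refine card_le_card fun e he => ?_
    induction e using Sym2.ind with
    | _ a b =>
      simp only [mem_filter, mem_edgeFinset, mem_edgeSet, Sym2.mem_iff, forall_eq_or_imp,
        forall_eq] at he
      exact mem_image.2 ⟨(a, b), mem_offDiag.2 ⟨he.2.1, he.2.2, he.1.ne⟩, rfl⟩
  have outer : #{e ∈ G.edgeFinset | ¬∀ v ∈ e, v ∈ S} ≤ #L := by
    calc #{e ∈ G.edgeFinset | ¬∀ v ∈ e, v ∈ S}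
        ≤ #(L.biUnion fun v => G.incidenceFinset v) := by
          refine card_le_card fun e he => ?_
          simp only [mem_filter, mem_edgeFinset, not_forall] at he
          obtain ⟨he, v, hv, hvS⟩ := he
          refine mem_biUnion.2 ⟨v, ?_, (G.mem_incidenceFinset v e).2 ⟨he, hv⟩⟩
          simp only [S, L, mem_filter, mem_univ, true_and] at hvS ⊢
          omega
      _ ≤ ∑ v ∈ L, #(G.incidenceFinset v) := card_biUnion_le
      _ ≤ ∑ v ∈ L, 1 := by
          refine sum_le_sum fun v hv => ?_
          rw [card_incidenceFinset_eq_degree, ← ncard_neighborSet_eq_degree]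
          simpa [L] using hv
      _ = #L := by rw [card_eq_sum_ones]
  rw [← coe_edgeFinset, Set.ncard_coe_finset, ← card_filter_add_card_filter_not
    (fun e => ∀ v ∈ e, v ∈ S)]
  omega

lemma four_le_card_two_le_ncard_neighborSet (h : Fintype.card V < G.edgeSet.ncard) :
    4 ≤ #{v | 2 ≤ (G.neighborSet v).ncard} := by
  have hsplit := card_filter_add_card_filter_not (s := univ)
    (fun v => 2 ≤ (G.neighborSet v).ncard)
  simp only [not_le, Nat.lt_succ_iff, card_univ] at hsplit
  have := G.ncard_edgeSet_le
  set k := #{v | 2 ≤ (G.neighborSet v).ncard}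
  by_contra! hk
  have : k.choose 2 ≤ k := by interval_cases k <;> decide
  omega

end Fintype

lemma ncard_neighborSet_sup_edge [Finite V] [DecidableEq V] (G : SimpleGraph V) {s t : V}
    (hst : s ≠ t) (hadj : ¬G.Adj s t) (v : V) :
    ((G ⊔ edge s t).neighborSet v).ncard =
      (G.neighborSet v).ncard + if v = s ∨ v = t then 1 else 0 := by
  rw [neighborSet_sup]
  by_cases hvs : v = s
  · subst hvs
    have : (edge v t).neighborSet v = {t} := by
      ext u
      simp only [mem_neighborSet, edge_adj, Set.mem_singleton_iff]
      aesop
    rw [this, Set.union_singleton, Set.ncard_insert_of_notMem (s := G.neighborSet v) hadj,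
      if_pos (Or.inl rfl)]
  by_cases hvt : v = t
  · subst hvt
    have : (edge s v).neighborSet v = {s} := by
      ext u
      simp only [mem_neighborSet, edge_adj, Set.mem_singleton_iff]
      aesop
    rw [this, Set.union_singleton,
      Set.ncard_insert_of_notMem (s := G.neighborSet v) (fun h => hadj h.symm), if_pos (Or.inr rfl)]
  · have : (edge s t).neighborSet v = ∅ := by ext; simp [edge_adj, hvs, hvt]
    rw [this, Set.union_empty, if_neg (by tauto), add_zero]

lemma ncard_neighborSet_map {W : Type*} (G : SimpleGraph V) (f : V ↪ W) (v : V) :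
    ((G.map f).neighborSet (f v)).ncard = (G.neighborSet v).ncard := by
  rw [neighborSet_map, Set.ncard_image_of_injective _ f.injective]

lemma ncard_neighborSet_pathGraph_add {n : ℕ} (v : Fin (n + 2)) :
    ((pathGraph (n + 2)).neighborSet v).ncard + (if v = 0 then 1 else 0) +
      (if v = Fin.last (n + 1) then 1 else 0) = 2 := by
  have hv := v.isLt
  by_cases h0 : v = 0
  · subst h0
    have : (pathGraph (n + 2)).neighborSet 0 = {1} := by
      ext u
      simp only [mem_neighborSet, pathGraph_adj, Set.mem_singleton_iff, Fin.ext_iff,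
        Fin.val_zero, Fin.val_one]
      omega
    rw [this, Set.ncard_singleton, if_pos rfl, if_neg (Fin.ext_iff.not.2 (by simp))]
  by_cases hl : v = Fin.last (n + 1)
  · subst hl
    have : (pathGraph (n + 2)).neighborSet (Fin.last (n + 1)) = {⟨n, by omega⟩} := by
      ext u
      simp only [mem_neighborSet, pathGraph_adj, Set.mem_singleton_iff, Fin.ext_iff,
        Fin.val_last]
      omega
    rw [this, Set.ncard_singleton, if_neg h0, if_pos rfl]
  · rw [Fin.ext_iff, Fin.val_zero] at h0
    rw [Fin.ext_iff, Fin.val_last] at hl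
    have : (pathGraph (n + 2)).neighborSet v = {⟨v - 1, by omega⟩, ⟨v + 1, by omega⟩} := by
      ext u
      simp only [mem_neighborSet, pathGraph_adj, Set.mem_insert_iff, Set.mem_singleton_iff,
        Fin.ext_iff]
      omega
    rw [this, Set.ncard_pair (by simp [Fin.ext_iff]), if_neg (by simp [Fin.ext_iff, h0]),
      if_neg (by simp [Fin.ext_iff, hl])]

lemma exists_connected_pathGraph_sup_two_edges {k : ℕ} (c : Fin (k + 4))
    (hc : c = 0 ∨ c = 2 ∧ 1 ≤ k) :
    ∃ G : SimpleGraph (Fin (k + 4)), G.Connected ∧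
      ∀ v, (G.neighborSet v).ncard = 2 + (if v = 2 then 1 else 0) + if v = c then 1 else 0 := by
  have h2 : ((2 : Fin (k + 4)) : ℕ) = 2 := Nat.mod_eq_of_lt (by omega : 2 < k + 4)
  have hc' : c.val = 0 ∨ c.val = 2 ∧ 1 ≤ k := by
    rcases hc with rfl | ⟨rfl, hk⟩
    exacts [Or.inl rfl, Or.inr ⟨h2, hk⟩]
  have h02 : (0 : Fin (k + 4)) ≠ 2 := by rw [Ne, Fin.ext_iff, h2]; simp
  have hclast : c ≠ Fin.last (k + 3) := by rw [Ne, Fin.ext_iff, Fin.val_last]; omega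
  have hpath02 : ¬(pathGraph (k + 4)).Adj 0 2 := by rw [pathGraph_adj, h2]; simp
  have hadj : ¬(pathGraph (k + 4) ⊔ edge 0 2).Adj c (Fin.last (k + 3)) := by
    simp only [sup_adj, pathGraph_adj, edge_adj, Fin.ext_iff, Fin.val_last, h2, Fin.val_zero]
    omega
  refine ⟨pathGraph (k + 4) ⊔ edge 0 2 ⊔ edge c (Fin.last (k + 3)),
    ((pathGraph_connected (k + 3)).mono le_sup_left).mono le_sup_left, fun v => ?_⟩
  have hpath : ((pathGraph (k + 4)).neighborSet v).ncard + (if v = 0 then 1 else 0) +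
      (if v = Fin.last (k + 3) then 1 else 0) = 2 := ncard_neighborSet_pathGraph_add v
  rw [ncard_neighborSet_sup_edge _ hclast hadj, ncard_neighborSet_sup_edge _ h02 hpath02]
  simp only [Fin.ext_iff, Fin.val_zero, Fin.val_last, h2] at hpath ⊢
  split_ifs at hpath ⊢ <;> omega

lemma exists_connected_ncard_neighborSet_eq_two_add [Fintype V] [DecidableEq V] (a b : V)
    (h4 : 4 ≤ Fintype.card V) (h5 : a = b → 5 ≤ Fintype.card V) :
    ∃ G : SimpleGraph V, G.Connected ∧
      ∀ v, (G.neighborSet v).ncard = 2 + (if v = a then 1 else 0) + if v = b then 1 else 0 := by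
  obtain ⟨k, hk⟩ : ∃ k, Fintype.card V = k + 4 := ⟨_, (Nat.sub_add_cancel h4).symm⟩
  set c : Fin (k + 4) := if a = b then 2 else 0
  have hc : c = 0 ∨ c = 2 ∧ 1 ≤ k := by
    by_cases hab : a = b
    · exact Or.inr ⟨if_pos hab, by have := h5 hab; omega⟩
    · exact Or.inl (if_neg hab)
  have h2c : (2 : Fin (k + 4)) = c ↔ a = b := by
    by_cases hab : a = b
    · simp [c, hab]
    · simp only [c, if_neg hab, hab, iff_false]
      rw [Fin.ext_iff, Fin.val_zero, Fin.coe_ofNat_eq_mod, Nat.mod_eq_of_lt (by omega : 2 < k + 4)]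
      omega
  obtain ⟨e, he2, hec⟩ := (Fintype.equivFinOfCardEq hk).symm.exists_apply_eq_and_apply_eq h2c
  obtain ⟨G, hG, hdeg⟩ := exists_connected_pathGraph_sup_two_edges c hc
  refine ⟨G.map e.toEmbedding, (Iso.map e G).connected_iff.1 hG, fun v => ?_⟩
  obtain ⟨u, rfl⟩ := e.surjective v
  rw [← Equiv.coe_toEmbedding, ncard_neighborSet_map, hdeg, ← he2, ← hec]
  simp only [Equiv.coe_toEmbedding, e.apply_eq_iff_eq]

lemma exists_connected_attach_leaf [Fintype V] [DecidableEq V] {v : V}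
    (G : SimpleGraph {x // x ≠ v}) (hG : G.Connected) (w : {x // x ≠ v}) :
    ∃ H : SimpleGraph V, H.Connected ∧ (H.neighborSet v).ncard = 1 ∧
      ∀ x : {x // x ≠ v}, (H.neighborSet x).ncard =
        (G.neighborSet x).ncard + if x = w then 1 else 0 := by
  set e := Function.Embedding.subtype fun x => x ≠ v
  have hvw : v ≠ w := w.2.symm
  have hv : ∀ y, ¬(G.map e).Adj v y := by
    intro y h
    obtain ⟨x, -, -, hx, -⟩ := (map_adj e G v y).1 h
    exact x.2 hx
  refine ⟨G.map e ⊔ edge v w, ?_, ?_, fun x => ?_⟩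
  · refine connected_iff_exists_forall_reachable _ |>.2 ⟨w, fun y => ?_⟩
    by_cases hy : y = v
    · subst hy
      exact Adj.reachable (Or.inr ((edge_adj _ _ _ _).2 ⟨Or.inr ⟨rfl, rfl⟩, hvw.symm⟩))
    · exact ((hG.preconnected w ⟨y, hy⟩).map (Embedding.map e G).toHom).mono le_sup_left
  · rw [ncard_neighborSet_sup_edge _ hvw (hv w), if_pos (Or.inl rfl)]
    simp [neighborSet, hv]
  · rw [ncard_neighborSet_sup_edge _ hvw (hv w), show (x : V) = e x from rfl,
      ncard_neighborSet_map]
    simp [e, x.2, Subtype.ext_iff]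

end SimpleGraph

structure IsBicyclicDegreeFun {V : Type*} [Fintype V] (f : V → ℕ) : Prop where
  one_le : ∀ v, 1 ≤ f v
  lt_card : ∀ v, f v < Fintype.card V
  sum_eq : ∑ v, f v = 2 * (Fintype.card V + 1)
  four_le_card_two_le : 4 ≤ #{v | 2 ≤ f v}

namespace IsBicyclicDegreeFun

variable {V : Type*} [Fintype V] {f : V → ℕ}

lemma three_le_of_forall_le (hf : IsBicyclicDegreeFun f) {v w : V} (hv : f v = 1)
    (hw : ∀ x, f x ≤ f w) : 3 ≤ f w := by
  classical
  by_contra! h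
  have hle : ∑ x ∈ univ.erase v, f x ≤ (Fintype.card V - 1) * 2 := by
    simpa [card_erase_of_mem] using
      sum_le_card_nsmul (univ.erase v) f 2 fun x _ => by have := hw x; omega
  have hsplit : f v + ∑ x ∈ univ.erase v, f x = ∑ x, f x := add_sum_erase _ _ (mem_univ v)
  have := hf.sum_eq
  omega

lemma five_le_card (hf : IsBicyclicDegreeFun f) {v : V} (hv : f v = 1) :
    5 ≤ Fintype.card V := by
  have hsplit := card_filter_add_card_filter_not (s := univ) fun x => 2 ≤ f x
  have : 0 < #{x | ¬2 ≤ f x} := card_pos.2 ⟨v, by simp [hv]⟩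
  have := hf.four_le_card_two_le
  rw [card_univ] at hsplit
  omega

lemma le_card_sub_two_of_ne (hf : IsBicyclicDegreeFun f) {v w x : V} (hv : f v = 1)
    (hw : ∀ x, f x ≤ f w) (hxw : x ≠ w) : f x ≤ Fintype.card V - 2 := by
  have := card_add_card_filter_add_le_sum hf.one_le hxw
  have := hf.five_le_card hv
  have := hf.four_le_card_two_le
  have := hf.sum_eq
  have := hw x
  omega

lemma remove_leaf [DecidableEq V] (hf : IsBicyclicDegreeFun f) {v w : V} (hv : f v = 1)
    (hw : ∀ x, f x ≤ f w) :
    IsBicyclicDegreeFun fun x : {x // x ≠ v} => f x - if x.val = w then 1 else 0 := by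
  have hw3 := hf.three_le_of_forall_le hv hw
  have hcard : Fintype.card {x // x ≠ v} = Fintype.card V - 1 := by
    rw [Fintype.card_subtype_compl, Fintype.card_subtype_eq]
  constructor
  · intro x
    have := hf.one_le x
    split_ifs with hx
    · subst hx
      omega
    · omega
  · intro x
    have := hf.lt_card x
    have := hf.five_le_card hv
    rw [hcard]
    split_ifs with hx
    · omega
    · have := hf.le_card_sub_two_of_ne hv hw hx
      omega
  · rw [← sum_subtype (univ.erase v) (by simp) fun x => f x - if x = w then 1 else 0, hcard,
      sum_tsub_distrib _ fun x _ => by have := hf.one_le x; split_ifs <;> omega, sum_ite_eq',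
      if_pos (mem_erase.2 ⟨?_, mem_univ w⟩)]
    · have := add_sum_erase univ f (mem_univ v)
      have := hf.sum_eq
      have := hf.five_le_card hv
      omega
    · rintro rfl
      omega
  · calc 4 ≤ #{x | 2 ≤ f x} := hf.four_le_card_two_le
      _ = #(({x | 2 ≤ f x} : Finset V).subtype (· ≠ v)) := by
        rw [card_subtype, filter_true_of_mem (p := (· ≠ v)) fun x hx => by
          rintro rfl; simp [hv] at hx]
      _ ≤ _ := card_le_card fun x hx => by
        simp only [mem_subtype, mem_filter, mem_univ, true_and] at hx ⊢
        split_ifs with hx'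
        · subst hx'
          omega
        · omega

theorem exists_connected_ncard_neighborSet_eq (hf : IsBicyclicDegreeFun f) :
    ∃ G : SimpleGraph V, G.Connected ∧ ∀ v, (G.neighborSet v).ncard = f v := by
  classical
  induction hn : Fintype.card V using Nat.strong_induction_on generalizing V with
  | _ n ih =>
  by_cases h2 : ∀ v, 2 ≤ f v
  · obtain ⟨a, b, hab⟩ := exists_eq_ite_add_ite_of_sum_eq_two (fun v => f v - 2) (by
      rw [sum_tsub_distrib _ fun v _ => h2 v, hf.sum_eq, sum_const, card_univ, smul_eq_mul]
      omega)
    have h4 : 4 ≤ Fintype.card V := hf.four_le_card_two_le.trans (card_le_univ _)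
    have h5 : a = b → 5 ≤ Fintype.card V := by
      rintro rfl
      have := hf.lt_card a
      have := hab a
      simp only [↓reduceIte] at this
      omega
    obtain ⟨G, hG, hdeg⟩ := SimpleGraph.exists_connected_ncard_neighborSet_eq_two_add a b h4 h5
    exact ⟨G, hG, fun v => by rw [hdeg]; have := hab v; have := h2 v; omega⟩
  · obtain ⟨v, hv⟩ := not_forall.1 h2
    replace hv : f v = 1 := by have := hf.one_le v; omega
    obtain ⟨w, -, hw⟩ := exists_max_image univ f ⟨v, mem_univ v⟩
    replace hw : ∀ x, f x ≤ f w := fun x => hw x (mem_univ x)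
    have hwv : w ≠ v := by rintro rfl; have := hf.three_le_of_forall_le hv hw; omega
    obtain ⟨G, hG, hdeg⟩ := ih _ (hn ▸ Fintype.card_subtype_lt (p := (· ≠ v)) (not_not.2 rfl))
      (hf.remove_leaf hv hw) rfl
    obtain ⟨H, hH, hHv, hHx⟩ := SimpleGraph.exists_connected_attach_leaf G hG ⟨w, hwv⟩
    refine ⟨H, hH, fun x => ?_⟩
    by_cases hx : x = v
    · rw [hx, hHv, hv]
    · rw [hHx ⟨x, hx⟩, hdeg]
      simp only [Subtype.ext_iff]
      split_ifs with h
      · subst h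
        have := hf.three_le_of_forall_le hv hw
        omega
      · rfl

end IsBicyclicDegreeFun

lemma le_apply_iff_lt_card_filter {n : ℕ} {d : ℕ → ℕ}
    (hmono : ∀ i j, i ≤ j → j < n → d j ≤ d i) {c k : ℕ} (hk : k < n) :
    c ≤ d k ↔ k < #{i : Fin n | c ≤ d i} := by
  constructor
  · intro hc
    calc k < #(Iic (⟨k, hk⟩ : Fin n)) := by simp
      _ ≤ _ := card_le_card fun i hi => by
        simp only [mem_Iic, Fin.le_def, mem_filter, mem_univ, true_and] at hi ⊢
        exact hc.trans (hmono i k hi hk)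
  · intro hlt
    by_contra! hc
    refine hlt.not_ge ?_
    calc #{i : Fin n | c ≤ d i} ≤ #(Iio (⟨k, hk⟩ : Fin n)) := card_le_card fun i hi => by
          simp only [mem_Iio, Fin.lt_def, mem_filter, mem_univ, true_and] at hi ⊢
          by_contra! hik
          exact ((hmono k i hik i.2).trans_lt hc).not_ge hi
      _ = k := by simp

namespace IsDegreeSequence

variable {n : ℕ} {G : SimpleGraph (Fin n)} {d : ℕ → ℕ}

lemma sum_range_eq (h : IsDegreeSequence G d) :
    ∑ i ∈ range n, d i = 2 * G.edgeSet.ncard := by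
  obtain ⟨σ, hσ⟩ := h
  rw [← G.sum_ncard_neighborSet_eq_two_mul_ncard_edgeSet, ← Equiv.sum_comp σ,
    ← Fin.sum_univ_eq_sum_range]
  simp only [hσ]

lemma card_filter_eq (h : IsDegreeSequence G d) (p : ℕ → Prop) [DecidablePred p] :
    #{i : Fin n | p (d i)} = #{v | p (G.neighborSet v).ncard} := by
  obtain ⟨σ, hσ⟩ := h
  exact card_equiv σ fun i => by simp [hσ]

end IsDegreeSequence

/-- Characterization of degree sequences of bicyclic graphs. -/
theorem bicyclic_degree_sequence_characterization (n : ℕ) (d : ℕ → ℕ)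
    (hpos : ∀ i, i < n → 1 ≤ d i)
    (hub : ∀ i, i < n → d i ≤ n - 1)
    (hmono : ∀ i j, i ≤ j → j < n → d j ≤ d i) :
    (∃ G : SimpleGraph (Fin n),
        G.Connected ∧ G.edgeSet.ncard = n + 1 ∧ IsDegreeSequence G d) ↔
      (4 ≤ n ∧ ∑ i ∈ Finset.range n, d i = 2 * (n + 1) ∧ 2 ≤ d 3) := by
  constructor
  · rintro ⟨G, -, hE, hG⟩
    have h4 : 4 ≤ #{i : Fin n | 2 ≤ d i} := by
      rw [hG.card_filter_eq (2 ≤ ·)]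
      exact G.four_le_card_two_le_ncard_neighborSet (by simp [hE])
    have hn : 4 ≤ n := h4.trans ((card_le_univ _).trans_eq (Fintype.card_fin n))
    exact ⟨hn, hE ▸ hG.sum_range_eq, (le_apply_iff_lt_card_filter hmono (by omega)).2 h4⟩
  · rintro ⟨hn, hsum, hd3⟩
    have hf : IsBicyclicDegreeFun fun i : Fin n => d i :=
      ⟨fun i => hpos i i.2, fun i => by have := hub i i.2; simp only [Fintype.card_fin]; omega,
        by rw [Fin.sum_univ_eq_sum_range, hsum, Fintype.card_fin],
        (le_apply_iff_lt_card_filter hmono (by omega)).1 hd3⟩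
    obtain ⟨G, hG, hdeg⟩ := hf.exists_connected_ncard_neighborSet_eq
    have hd : IsDegreeSequence G d := ⟨1, hdeg⟩
    exact ⟨G, hG, by have := hd.sum_range_eq; omega, hd⟩
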